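/- Fix η, P > 0, σ_b, σ_w > 0, and squared distances Z_b, Z_w > 0. Define R_s(a) = (1/2)·log₂((1 + ηPa/(Z_b σ_b²))/(1 + ηPa/(Z_w σ_w²))) for attenuation factor a ∈ (0, 1]. If Z_b σ_b² < Z_w σ_w², then R_s(a) is strictly increasing in a; if Z_b σ_b² > Z_w σ_w², then R_s(a) is strictly decreasing in a. -/
import Mathlib


open Real Set

lemma ratio_aux {c d x y : ℝ} (hc : 0 < c) (hd : 0 < d) (hcd : d < c)
    (hx : 0 < x) (hxy : x < y) :
    (1 + c * x) / (1 + d * x) < (1 + c * y) / (1 + d * y) := by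
  have h1 : 0 < 1 + d * x := by positivity
  have h2 : 0 < 1 + d * y := by nlinarith
  rw [div_lt_div_iff₀ h1 h2]
  nlinarith [mul_pos (sub_pos.2 hcd) (sub_pos.2 hxy)]

theorem secrecy_rate_monotone_in_attenuation (η P σb σw Zb Zw : ℝ)
    (hη : 0 < η) (hP : 0 < P) (hσb : 0 < σb) (hσw : 0 < σw)
    (hZb : 0 < Zb) (hZw : 0 < Zw) :
    (Zb * σb^2 < Zw * σw^2 →
      StrictMonoOn (fun a : ℝ => (1/2) * Real.logb 2
        ((1 + η * P * a / (Zb * σb^2)) / (1 + η * P * a / (Zw * σw^2)))) (Ioc 0 1)) ∧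
    (Zb * σb^2 > Zw * σw^2 →
      StrictAntiOn (fun a : ℝ => (1/2) * Real.logb 2
        ((1 + η * P * a / (Zb * σb^2)) / (1 + η * P * a / (Zw * σw^2)))) (Ioc 0 1)) := by
  have hB : 0 < Zb * σb^2 := by positivity
  have hW : 0 < Zw * σw^2 := by positivity
  set c : ℝ := η * P / (Zb * σb^2) with hcdef
  set d : ℝ := η * P / (Zw * σw^2) with hddef
  have hc : 0 < c := by positivity
  have hd : 0 < d := by positivity
  have hrw : ∀ a : ℝ, η * P * a / (Zb * σb^2) = c * a := fun a => by
    rw [hcdef]; ring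
  have hrw' : ∀ a : ℝ, η * P * a / (Zw * σw^2) = d * a := fun a => by
    rw [hddef]; ring
  have hposf : ∀ e : ℝ, 0 < e → ∀ a ∈ Ioc (0:ℝ) 1, 0 < (1 + e * a) := by
    intro e he a ha
    nlinarith [ha.1]
  constructor
  · intro hlt
    have hdc : d < c := by
      rw [hcdef, hddef]
      exact div_lt_div_of_pos_left (by positivity) hB hlt
    intro x hx y hy hxy
    simp only [hrw, hrw']
    have key : (1 + c * x) / (1 + d * x) < (1 + c * y) / (1 + d * y) :=
      ratio_aux hc hd hdc hx.1 hxy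
    have hp : 0 < (1 + c * x) / (1 + d * x) := by
      have := hposf c hc x hx
      have := hposf d hd x hx
      positivity
    have := Real.logb_lt_logb (by norm_num : (1:ℝ) < 2) hp key
    linarith
  · intro hgt
    have hcd : c < d := by
      rw [hcdef, hddef]
      exact div_lt_div_of_pos_left (by positivity) hW hgt
    intro x hx y hy hxy
    simp only [hrw, hrw']
    have key : (1 + d * x) / (1 + c * x) < (1 + d * y) / (1 + c * y) :=
      ratio_aux hd hc hcd hx.1 hxy
    have h1 : 0 < 1 + c * x := hposf c hc x hx
    have h2 : 0 < 1 + c * y := hposf c hc y hy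
    have h3 : 0 < 1 + d * x := hposf d hd x hx
    have h4 : 0 < 1 + d * y := hposf d hd y hy
    have key' : (1 + c * y) / (1 + d * y) < (1 + c * x) / (1 + d * x) := by
      rw [div_lt_div_iff₀ h4 h3]
      rw [div_lt_div_iff₀ h1 h2] at key
      nlinarith
    have hp : 0 < (1 + c * y) / (1 + d * y) := by positivity
    have := Real.logb_lt_logb (by norm_num : (1:ℝ) < 2) hp key'
    linarith
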